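/- arXiv:2505.06082 — 4 statements merged into one kernel-verified Lean document; each statement's English description precedes it below -/
import Mathlib

section
/- Discrete mod-2 intersection invariance on the torus: if S is a 1-cycle of the n×n toric lattice, then the parity of |S ∩ C_x| is the same for all x ∈ ZMod n; that is, the mod-2 intersection number of a cycle with the vertical cut does not depend on where the cut is placed. -/
/-- The star of a vertex `v` of the `n × n` toric lattice: the four edges incident to `v`. -/
def toricStar (n : ℕ) (v : ZMod n × ZMod n) : Set ((ZMod n × ZMod n) × Fin 2) :=
  {(v, 0), (v, 1), (v - (1, 0), 0), (v - (0, 1), 1)}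

/-- `S` is a 1-cycle of the toric lattice: it meets every vertex star in an even number of
edges. -/
def toricIsCycle (n : ℕ) (S : Set ((ZMod n × ZMod n) × Fin 2)) : Prop :=
  ∀ v : ZMod n × ZMod n, Even ((S ∩ toricStar n v).ncard)

/-- The vertical cut `C_x`: all horizontal (direction-0) edges with first coordinate `x`. -/
def toricCut (n : ℕ) (x : ZMod n) : Set ((ZMod n × ZMod n) × Fin 2) :=
  {e | ∃ y : ZMod n, e = ((x, y), 0)}

/-- The mod-2 intersection number of a 1-cycle with the vertical cut `C_x` is independent
of `x`. -/
theorem toric_cycle_cut_parity_invariant (n : ℕ) (hn : 2 ≤ n)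
    (S : Set ((ZMod n × ZMod n) × Fin 2)) (hS : toricIsCycle n S)
    (x x' : ZMod n) :
    (S ∩ toricCut n x).ncard % 2 = (S ∩ toricCut n x').ncard % 2 := by
  classical
  haveI : NeZero n := ⟨by omega⟩
  haveI : Fact (1 < n) := ⟨by omega⟩
  have h10 : (1 : ZMod n) ≠ 0 := one_ne_zero
  have f01 : (0 : Fin 2) ≠ 1 := by decide
  have f10 : (1 : Fin 2) ≠ 0 := by decide
  set g : ((ZMod n × ZMod n) × Fin 2) → ZMod 2 :=
    fun e => if e ∈ S then 1 else 0 with hg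
  -- cut sums
  have cutsum : ∀ z : ZMod n,
      ((S ∩ toricCut n z).ncard : ZMod 2) = ∑ y : ZMod n, g ((z, y), 0) := by
    intro z
    have hinj : Function.Injective
        (fun y : ZMod n => (((z, y), 0) : (ZMod n × ZMod n) × Fin 2)) := by
      intro a b h
      simpa using h
    have hset : S ∩ toricCut n z =
        ↑((Finset.univ.filter (fun y : ZMod n => ((z, y), 0) ∈ S)).image
          (fun y : ZMod n => (((z, y), 0) : (ZMod n × ZMod n) × Fin 2))) := by
      ext e
      simp only [Set.mem_inter_iff, toricCut, Set.mem_setOf_eq, Finset.coe_image,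
        Finset.coe_filter, Finset.mem_univ, true_and, Set.mem_image, Set.mem_setOf_eq]
      constructor
      · rintro ⟨heS, y, rfl⟩; exact ⟨y, heS, rfl⟩
      · rintro ⟨y, hy, rfl⟩; exact ⟨hy, y, rfl⟩
    rw [hset, Set.ncard_coe_finset, Finset.card_image_of_injective _ hinj]
    rw [← Finset.sum_boole]
  -- star sums
  have starsum : ∀ v : ZMod n × ZMod n,
      g (v, 0) + g (v, 1) + g (v - (1, 0), 0) + g (v - (0, 1), 1) = 0 := by
    intro v
    have hvc : v ≠ v - (1, 0) := by
      intro h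
      have := sub_eq_self.mp h.symm
      exact h10 (congrArg Prod.fst this)
    have hvd : v ≠ v - (0, 1) := by
      intro h
      have := sub_eq_self.mp h.symm
      exact h10 (congrArg Prod.snd this)
    have ne1 : ((v, 0) : (ZMod n × ZMod n) × Fin 2) ≠ (v, 1) :=
      fun h => f01 (congrArg Prod.snd h)
    have ne2 : ((v, 0) : (ZMod n × ZMod n) × Fin 2) ≠ (v - (1, 0), 0) :=
      fun h => hvc (congrArg Prod.fst h)
    have ne3 : ((v, 0) : (ZMod n × ZMod n) × Fin 2) ≠ (v - (0, 1), 1) :=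
      fun h => f01 (congrArg Prod.snd h)
    have ne4 : ((v, 1) : (ZMod n × ZMod n) × Fin 2) ≠ (v - (1, 0), 0) :=
      fun h => f10 (congrArg Prod.snd h)
    have ne5 : ((v, 1) : (ZMod n × ZMod n) × Fin 2) ≠ (v - (0, 1), 1) :=
      fun h => hvd (congrArg Prod.fst h)
    have ne6 : ((v - (1, 0), 0) : (ZMod n × ZMod n) × Fin 2) ≠ (v - (0, 1), 1) :=
      fun h => f01 (congrArg Prod.snd h)
    have hset : S ∩ toricStar n v =
        ↑(({(v, 0), (v, 1), (v - (1, 0), 0), (v - (0, 1), 1)} :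
            Finset ((ZMod n × ZMod n) × Fin 2)).filter (· ∈ S)) := by
      ext e
      simp only [toricStar, Set.mem_inter_iff, Set.mem_insert_iff, Set.mem_singleton_iff,
        Finset.coe_filter, Finset.mem_insert, Finset.mem_singleton, Set.mem_setOf_eq]
      tauto
    have hcard := hS v
    rw [hset, Set.ncard_coe_finset] at hcard
    obtain ⟨m, hm⟩ := hcard
    have hcast : ((Finset.filter (· ∈ S)
        ({(v, 0), (v, 1), (v - (1, 0), 0), (v - (0, 1), 1)} :
          Finset ((ZMod n × ZMod n) × Fin 2))).card : ZMod 2) = 0 := by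
      rw [hm]
      have : ((m + m : ℕ) : ZMod 2) = 2 * (m : ZMod 2) := by push_cast; ring
      rw [this]
      have h2 : (2 : ZMod 2) = 0 := by decide
      rw [h2, zero_mul]
    rw [← Finset.sum_boole] at hcast
    rw [Finset.sum_insert (by simp [ne1, ne2, ne3]),
        Finset.sum_insert (by simp [ne4, ne5]),
        Finset.sum_insert (by simp [ne6]),
        Finset.sum_singleton] at hcast
    calc g (v, 0) + g (v, 1) + g (v - (1, 0), 0) + g (v - (0, 1), 1)
        = g (v, 0) + (g (v, 1) + (g (v - (1, 0), 0) + g (v - (0, 1), 1))) := by ring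
      _ = 0 := hcast
  -- step
  have step : ∀ z : ZMod n,
      ((S ∩ toricCut n z).ncard : ZMod 2) = ((S ∩ toricCut n (z + 1)).ncard : ZMod 2) := by
    intro z
    have hsum : ∑ y : ZMod n,
        (g ((z + 1, y), 0) + g ((z + 1, y), 1) + g ((z, y), 0) + g ((z + 1, y - 1), 1))
        = 0 := by
      refine Finset.sum_eq_zero fun y _ => ?_
      have h := starsum (z + 1, y)
      have e1 : ((z + 1, y) : ZMod n × ZMod n) - (1, 0) = (z, y) := by
        rw [Prod.mk_sub_mk]; simp
      have e2 : ((z + 1, y) : ZMod n × ZMod n) - (0, 1) = (z + 1, y - 1) := by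
        rw [Prod.mk_sub_mk]; simp
      rw [e1, e2] at h
      exact h
    have hreindex : ∑ y : ZMod n, g ((z + 1, y - 1), 1) = ∑ y : ZMod n, g ((z + 1, y), 1) :=
      Fintype.sum_equiv (Equiv.subRight (1 : ZMod n)) _ _ (fun _ => rfl)
    rw [Finset.sum_add_distrib, Finset.sum_add_distrib, Finset.sum_add_distrib,
        hreindex] at hsum
    have h2 : ∑ y : ZMod n, g ((z + 1, y), 1) + ∑ y : ZMod n, g ((z + 1, y), 1) = 0 :=
      CharTwo.add_self_eq_zero _
    have key : ∑ y : ZMod n, g ((z + 1, y), 0) + ∑ y : ZMod n, g ((z, y), 0) = 0 := by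
      linear_combination hsum - h2
    rw [cutsum, cutsum]
    have hC : ∑ y : ZMod n, g ((z, y), 0) = -∑ y : ZMod n, g ((z + 1, y), 0) :=
      eq_neg_of_add_eq_zero_right key
    rw [hC, CharTwo.neg_eq]
  -- iterate
  have iter : ∀ (k : ℕ) (z : ZMod n),
      ((S ∩ toricCut n z).ncard : ZMod 2) = ((S ∩ toricCut n (z + k)).ncard : ZMod 2) := by
    intro k
    induction k with
    | zero => intro z; simp
    | succ m ih =>
        intro z
        have e : (z + (m : ZMod n)) + 1 = z + ((m + 1 : ℕ) : ZMod n) := by push_cast; ring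
        rw [ih z, step (z + (m : ZMod n)), e]
  have hx' : x + (((x' - x).val : ℕ) : ZMod n) = x' := by
    rw [ZMod.natCast_val, ZMod.cast_id]
    ring
  have hfinal : ((S ∩ toricCut n x).ncard : ZMod 2) = ((S ∩ toricCut n x').ncard : ZMod 2) := by
    rw [iter (x' - x).val x, hx']
  exact (ZMod.natCast_eq_natCast_iff _ _ _).mp hfinal
end

section
/- The code distance of the toric code on the n×n toric lattice equals n: the minimum cardinality of a 1-cycle S with |S ∩ C_0| odd is exactly n. In particular every homologically nontrivial cycle in the horizontal class has at least n edges, and the loop L_0 = {((x,0),0) : x ∈ ZMod n} is a 1-cycle of cardinality n with |L_0 ∩ C_0| = 1. -/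
/-- The horizontal loop `L_y`: all horizontal (direction-0) edges with second coordinate `y`. -/
def toricLoop (n : ℕ) (y : ZMod n) : Set ((ZMod n × ZMod n) × Fin 2) :=
  {e | ∃ x : ZMod n, e = ((x, y), 0)}

open Classical Finset in
private lemma toric_cut_ncard (n : ℕ) [NeZero n] (S : Set ((ZMod n × ZMod n) × Fin 2))
    (x : ZMod n) :
    (S ∩ toricCut n x).ncard
      = (Finset.univ.filter
          (fun y : ZMod n => (((x, y) : ZMod n × ZMod n), (0 : Fin 2)) ∈ S)).card := by
  have himg : S ∩ toricCut n x
      = (fun y : ZMod n => (((x, y) : ZMod n × ZMod n), (0 : Fin 2)))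
        '' {y : ZMod n | (((x, y) : ZMod n × ZMod n), (0 : Fin 2)) ∈ S} := by
    ext e
    constructor
    · rintro ⟨heS, y, rfl⟩
      exact ⟨y, heS, rfl⟩
    · rintro ⟨y, hy, rfl⟩
      exact ⟨hy, y, rfl⟩
  rw [himg, Set.ncard_image_of_injective _ (fun a b h => by simpa [Prod.ext_iff] using h)]
  rw [Set.ncard_eq_toFinset_card']
  congr 1
  ext y
  simp

open Classical Finset in
private lemma toric_lower (n : ℕ) (hn : 2 ≤ n) (S : Set ((ZMod n × ZMod n) × Fin 2))
    (hS : toricIsCycle n S) (hodd : Odd ((S ∩ toricCut n 0).ncard)) : n ≤ S.ncard := by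
  haveI : NeZero n := ⟨by omega⟩
  haveI : Fact (1 < n) := ⟨hn⟩
  have h10 : (1 : ZMod n) ≠ 0 := one_ne_zero
  set N : ZMod n → ℕ := fun x => (Finset.univ.filter
      (fun y : ZMod n => (((x, y) : ZMod n × ZMod n), (0 : Fin 2)) ∈ S)).card with hNdef
  set χ : ((ZMod n × ZMod n) × Fin 2) → ZMod 2 := fun e => if e ∈ S then 1 else 0 with hχdef
  -- each star contributes zero mod 2
  have hstar : ∀ v : ZMod n × ZMod n,
      χ (v, 0) + χ (v, 1) + χ (v - (1, 0), 0) + χ (v - (0, 1), 1) = 0 := by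
    intro v
    have hne1 : v ≠ v - (1, 0) := by
      intro h
      have := sub_eq_self.mp h.symm
      simp [Prod.ext_iff] at this
    have hne2 : v ≠ v - (0, 1) := by
      intro h
      have := sub_eq_self.mp h.symm
      simp [Prod.ext_iff] at this
    have hEv := hS v
    have hset : S ∩ toricStar n v =
        ↑(({(v, (0 : Fin 2)), (v, 1), (v - (1, 0), 0), (v - (0, 1), 1)} :
            Finset ((ZMod n × ZMod n) × Fin 2)).filter (· ∈ S)) := by
      ext e
      simp only [toricStar, Set.mem_inter_iff, Set.mem_insert_iff, Set.mem_singleton_iff,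
        Finset.coe_filter, Finset.mem_insert, Finset.mem_singleton, Set.mem_setOf_eq]
      tauto
    rw [hset, Set.ncard_coe_finset, Finset.card_filter] at hEv
    have hcast : ((∑ e ∈ ({(v, (0 : Fin 2)), (v, 1), (v - (1, 0), 0), (v - (0, 1), 1)} :
        Finset ((ZMod n × ZMod n) × Fin 2)), if e ∈ S then 1 else 0 : ℕ) : ZMod 2) = 0 :=
      (ZMod.natCast_eq_zero_iff _ 2).mpr hEv.two_dvd
    push_cast at hcast
    have hd1 : ((v, (0 : Fin 2)) : (ZMod n × ZMod n) × Fin 2) ∉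
        ({(v, 1), (v - (1, 0), 0), (v - (0, 1), 1)} :
          Finset ((ZMod n × ZMod n) × Fin 2)) := by
      simp [Prod.ext_iff, hne1]
    have hd2 : ((v, (1 : Fin 2)) : (ZMod n × ZMod n) × Fin 2) ∉
        ({(v - (1, 0), 0), (v - (0, 1), 1)} :
          Finset ((ZMod n × ZMod n) × Fin 2)) := by
      simp [Prod.ext_iff, hne2]
    have hd3 : ((v - (1, 0), (0 : Fin 2)) : (ZMod n × ZMod n) × Fin 2) ∉
        ({(v - (0, 1), 1)} : Finset ((ZMod n × ZMod n) × Fin 2)) := by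
      simp [Prod.ext_iff]
    rw [Finset.sum_insert hd1, Finset.sum_insert hd2, Finset.sum_insert hd3,
      Finset.sum_singleton] at hcast
    simpa [hχdef, ← add_assoc, apply_ite (Nat.cast : ℕ → ZMod 2)] using hcast
  -- column sums
  have hcol : ∀ x : ZMod n, (∑ y : ZMod n, χ ((x, y), 0)) = (N x : ZMod 2) := by
    intro x
    rw [hNdef]
    simp only [Finset.card_filter]
    push_cast
    simp [hχdef, apply_ite (Nat.cast : ℕ → ZMod 2)]
  have hrel : ∀ x : ZMod n, (N x : ZMod 2) = (N (x - 1) : ZMod 2) := by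
    intro x
    have hsum : (∑ y : ZMod n,
        (χ ((x, y), 0) + χ ((x, y), 1) + χ ((x - 1, y), 0) + χ ((x, y - 1), 1))) = 0 := by
      apply Finset.sum_eq_zero
      intro y _
      have := hstar (x, y)
      simpa [Prod.mk_sub_mk, sub_zero] using this
    rw [Finset.sum_add_distrib, Finset.sum_add_distrib, Finset.sum_add_distrib] at hsum
    have hvert : (∑ y : ZMod n, χ ((x, y - 1), 1)) = (∑ y : ZMod n, χ ((x, y), 1)) :=
      Fintype.sum_equiv (Equiv.subRight (1 : ZMod n)) _ _ (fun y => rfl)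
    rw [hvert, hcol x, hcol (x - 1)] at hsum
    have : (N x : ZMod 2) + (N (x - 1) : ZMod 2) = 0 := by
      have h2 : (∑ y : ZMod n, χ ((x, y), 1)) + (∑ y : ZMod n, χ ((x, y), 1)) = 0 :=
        CharTwo.add_self_eq_zero _
      calc (N x : ZMod 2) + (N (x - 1) : ZMod 2)
          = (N x : ZMod 2) + (∑ y : ZMod n, χ ((x, y), 1)) + (N (x - 1) : ZMod 2)
              + (∑ y : ZMod n, χ ((x, y), 1)) - 
              ((∑ y : ZMod n, χ ((x, y), 1)) + (∑ y : ZMod n, χ ((x, y), 1))) := by ring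
        _ = 0 := by rw [hsum, h2, sub_zero]
    have := eq_neg_of_add_eq_zero_left this
    rwa [CharTwo.neg_eq] at this
  have hconst : ∀ x : ZMod n, (N x : ZMod 2) = (N 0 : ZMod 2) := by
    have hk : ∀ k : ℕ, (N ((k : ℕ) : ZMod n) : ZMod 2) = (N 0 : ZMod 2) := by
      intro k
      induction k with
      | zero => simp
      | succ k ih =>
        have := hrel (((k + 1 : ℕ) : ZMod n))
        rw [this]
        have he : ((k + 1 : ℕ) : ZMod n) - 1 = ((k : ℕ) : ZMod n) := by push_cast; ring
        rw [he, ih]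
    intro x
    have := hk x.val
    rwa [ZMod.natCast_rightInverse x] at this
  have hNodd : ∀ x : ZMod n, Odd (N x) := by
    intro x
    have h0 : Odd (N 0) := by
      have h := hodd
      rw [toric_cut_ncard n S 0] at h
      exact h
    have := hconst x
    rw [ZMod.natCast_eq_natCast_iff'] at this
    rw [Nat.odd_iff] at h0 ⊢
    rw [this, h0]
  have hex : ∀ x : ZMod n, ∃ y : ZMod n, (((x, y) : ZMod n × ZMod n), (0 : Fin 2)) ∈ S := by
    intro x
    have := (hNodd x).pos
    rw [hNdef] at this
    obtain ⟨y, hy⟩ := Finset.card_pos.mp this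
    exact ⟨y, (Finset.mem_filter.mp hy).2⟩
  choose g hg using hex
  have hf : Function.Injective (fun x : ZMod n => (⟨((x, g x), 0), hg x⟩ : S)) := by
    intro a b h
    simpa [Prod.ext_iff] using congrArg (fun e : S => (e : (ZMod n × ZMod n) × Fin 2).1.1) h
  calc n = Nat.card (ZMod n) := (Nat.card_zmod n).symm
    _ ≤ Nat.card S := Nat.card_le_card_of_injective _ hf
    _ = S.ncard := Nat.card_coe_set_eq S

private lemma toric_loop_cycle (n : ℕ) (hn : 2 ≤ n) : toricIsCycle n (toricLoop n 0) := by
  haveI : NeZero n := ⟨by omega⟩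
  haveI : Fact (1 < n) := ⟨hn⟩
  have h10 : (1 : ZMod n) ≠ 0 := one_ne_zero
  rintro ⟨a, b⟩
  have hstar_eq : toricStar n (a, b) =
      ({(((a, b) : ZMod n × ZMod n), (0 : Fin 2)), (((a, b) : ZMod n × ZMod n), 1),
        (((a - 1, b) : ZMod n × ZMod n), 0), (((a, b - 1) : ZMod n × ZMod n), 1)} :
        Set ((ZMod n × ZMod n) × Fin 2)) := by
    have h1 : ((a, b) : ZMod n × ZMod n) - (1, 0) = (a - 1, b) := by
      simp [Prod.ext_iff]
    have h2 : ((a, b) : ZMod n × ZMod n) - (0, 1) = (a, b - 1) := by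
      simp [Prod.ext_iff]
    rw [toricStar, h1, h2]
  by_cases hb : b = 0
  · subst hb
    have hset : toricLoop n 0 ∩ toricStar n (a, 0)
        = {(((a, 0) : ZMod n × ZMod n), (0 : Fin 2)), (((a - 1, 0) : ZMod n × ZMod n), 0)} := by
      rw [hstar_eq]
      ext e
      simp only [toricLoop, Set.mem_inter_iff, Set.mem_setOf_eq, Set.mem_insert_iff,
        Set.mem_singleton_iff]
      constructor
      · rintro ⟨⟨x, rfl⟩, h | h | h | h⟩
        · exact Or.inl h
        · simpa using congrArg Prod.snd h
        · exact Or.inr h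
        · simpa using congrArg Prod.snd h
      · rintro (rfl | rfl)
        · exact ⟨⟨a, rfl⟩, Or.inl rfl⟩
        · exact ⟨⟨a - 1, rfl⟩, Or.inr (Or.inr (Or.inl rfl))⟩
    rw [hset, Set.ncard_pair]
    · exact even_two
    · intro h
      have h1 : a = a - 1 := (congrArg (fun e : (ZMod n × ZMod n) × Fin 2 => e.1.1) h)
      exact h10 (sub_eq_self.mp h1.symm)
  · have hset : toricLoop n 0 ∩ toricStar n (a, b) = ∅ := by
      rw [hstar_eq]
      ext e
      simp only [toricLoop, Set.mem_inter_iff, Set.mem_setOf_eq, Set.mem_insert_iff,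
        Set.mem_singleton_iff, Set.mem_empty_iff_false, iff_false, not_and]
      rintro ⟨x, rfl⟩ (h | h | h | h)
      · exact hb ((congrArg (fun e : (ZMod n × ZMod n) × Fin 2 => e.1.2) h).symm)
      · simpa using congrArg Prod.snd h
      · exact hb ((congrArg (fun e : (ZMod n × ZMod n) × Fin 2 => e.1.2) h).symm)
      · simpa using congrArg Prod.snd h
    rw [hset]
    simp

private lemma toric_loop_ncard (n : ℕ) [NeZero n] : (toricLoop n 0).ncard = n := by
  have : toricLoop n 0 = Set.range
      (fun x : ZMod n => (((x, 0) : ZMod n × ZMod n), (0 : Fin 2))) := by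
    ext e; simp [toricLoop, Set.mem_range, eq_comm]
  rw [this, ← Set.image_univ,
    Set.ncard_image_of_injective _ (fun a b h => by simpa [Prod.ext_iff] using h),
    Set.ncard_univ, Nat.card_zmod]

private lemma toric_loop_cut (n : ℕ) [NeZero n] :
    (toricLoop n 0 ∩ toricCut n 0).ncard = 1 := by
  have : toricLoop n 0 ∩ toricCut n 0
      = {((((0 : ZMod n), (0 : ZMod n)) : ZMod n × ZMod n), (0 : Fin 2))} := by
    ext e
    simp only [toricLoop, toricCut, Set.mem_inter_iff, Set.mem_setOf_eq,
      Set.mem_singleton_iff]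
    constructor
    · rintro ⟨⟨x, rfl⟩, y, h⟩
      simp_all [Prod.ext_iff]
    · rintro rfl
      exact ⟨⟨0, rfl⟩, 0, rfl⟩
  rw [this, Set.ncard_singleton]

/-- The code distance of the toric code equals `n`: the least cardinality of a 1-cycle
meeting the cut `C_0` an odd number of times is `n`, and the loop `L_0` is a 1-cycle of
cardinality `n` meeting `C_0` in exactly one edge. -/
theorem toric_code_distance (n : ℕ) (hn : 2 ≤ n) :
    IsLeast {k : ℕ | ∃ S : Set ((ZMod n × ZMod n) × Fin 2),
        toricIsCycle n S ∧ Odd ((S ∩ toricCut n 0).ncard) ∧ S.ncard = k} n ∧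
    toricIsCycle n (toricLoop n 0) ∧ (toricLoop n 0).ncard = n ∧
    (toricLoop n 0 ∩ toricCut n 0).ncard = 1 := by
  haveI : NeZero n := ⟨by omega⟩
  refine ⟨⟨⟨toricLoop n 0, toric_loop_cycle n hn, ?_, toric_loop_ncard n⟩, ?_⟩,
    toric_loop_cycle n hn, toric_loop_ncard n, toric_loop_cut n⟩
  · rw [toric_loop_cut n]; exact odd_one
  · rintro k ⟨S, hS, hodd, rfl⟩
    exact toric_lower n hn S hS hodd
end

section
/- The plane P_{x₀} (the set of all direction-0 edges of the N×N×N 3-torus lattice whose base point has first coordinate x₀), which represents a non-compressible 2-torus supporting a logical σ_Z operator, is a 1-cocycle: for every x₀ ∈ ZMod N and every face f, the cardinality of P_{x₀} ∩ ∂f is even. -/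
/-- The standard basis vector `eᵢ` of `(ZMod N)³` (vertices indexed by `Fin 3 → ZMod N`). -/
def basis3 (N : ℕ) (i : Fin 3) : Fin 3 → ZMod N := fun j => if j = i then 1 else 0

/-- The star of a vertex `v` of the `N × N × N` 3-torus lattice: the six edges incident to
`v`, namely `(v, i)` and `(v - eᵢ, i)` for `i ∈ Fin 3`. -/
def star3 (N : ℕ) (v : Fin 3 → ZMod N) : Set ((Fin 3 → ZMod N) × Fin 3) :=
  {e | ∃ i : Fin 3, e = (v, i) ∨ e = (v - basis3 N i, i)}

/-- The boundary of a face `(v, k)` of the 3-torus lattice: the four edges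
`(v, i)`, `(v, j)`, `(v + e_j, i)`, `(v + e_i, j)` where `{i, j} = {0,1,2} \ {k}`. -/
def faceBd3 (N : ℕ) (f : (Fin 3 → ZMod N) × Fin 3) : Set ((Fin 3 → ZMod N) × Fin 3) :=
  {e | ∃ i : Fin 3, i ≠ f.2 ∧
      (e = (f.1, i) ∨ ∃ j : Fin 3, j ≠ f.2 ∧ j ≠ i ∧ e = (f.1 + basis3 N j, i))}

/-- `S` is a 1-cycle of the 3-torus lattice. -/
def isCycle3 (N : ℕ) (S : Set ((Fin 3 → ZMod N) × Fin 3)) : Prop :=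
  ∀ v : Fin 3 → ZMod N, Even ((S ∩ star3 N v).ncard)

/-- `T` is a 1-cocycle of the 3-torus lattice. -/
def isCocycle3 (N : ℕ) (T : Set ((Fin 3 → ZMod N) × Fin 3)) : Prop :=
  ∀ f : (Fin 3 → ZMod N) × Fin 3, Even ((T ∩ faceBd3 N f).ncard)

/-- The plane `P_x`: all direction-0 edges whose base point has first coordinate `x`;
a non-compressible 2-torus in the 3-torus. -/
def plane3 (N : ℕ) (x : ZMod N) : Set ((Fin 3 → ZMod N) × Fin 3) :=
  {e | ∃ y z : ZMod N, e = (![x, y, z], 0)}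

/-- The straight loop `L = {((t,0,0), 0) : t ∈ ZMod N}`, a non-contractible loop. -/
def loop3 (N : ℕ) : Set ((Fin 3 → ZMod N) × Fin 3) :=
  {e | ∃ t : ZMod N, e = (![t, 0, 0], 0)}

/-- The coboundary of an edge `e`: all faces `f` with `e ∈ ∂f`. -/
def coface3 (N : ℕ) (e : (Fin 3 → ZMod N) × Fin 3) : Set ((Fin 3 → ZMod N) × Fin 3) :=
  {f | e ∈ faceBd3 N f}

/-- The boundary of a cube `c`: the six faces `(c, k)` and `(c + e_k, k)` for `k ∈ Fin 3`. -/
def cubeBd3 (N : ℕ) (c : Fin 3 → ZMod N) : Set ((Fin 3 → ZMod N) × Fin 3) :=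
  {f | ∃ k : Fin 3, f = (c, k) ∨ f = (c + basis3 N k, k)}

lemma mem_plane3 {N : ℕ} {x : ZMod N} {e : (Fin 3 → ZMod N) × Fin 3} :
    e ∈ plane3 N x ↔ e.2 = 0 ∧ e.1 0 = x := by
  obtain ⟨u, i⟩ := e
  constructor
  · rintro ⟨y, z, h⟩
    rw [Prod.ext_iff] at h
    obtain ⟨h1, h2⟩ := h
    refine ⟨h2, by rw [h1]; rfl⟩
  · rintro ⟨h2, h0⟩
    simp only at h2 h0
    subst h2
    refine ⟨u 1, u 2, ?_⟩
    have huu : u = ![x, u 1, u 2] := by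
      funext j; fin_cases j <;> simp [h0]
    exact Prod.ext_iff.mpr ⟨huu, rfl⟩

/-- The plane `P x₀` (a non-compressible 2-torus supporting a logical σ_Z operator) is a
1-cocycle: it meets every face boundary in an even number of edges. -/
theorem torus3_plane_is_cocycle (N : ℕ) (hN : 2 ≤ N) (x₀ : ZMod N)
    (f : (Fin 3 → ZMod N) × Fin 3) :
    Even ((plane3 N x₀ ∩ faceBd3 N f).ncard) := by
  haveI : Fact (1 < N) := ⟨hN⟩
  obtain ⟨v, k⟩ := f
  have pair : ∀ j : Fin 3, j ≠ 0 → v ≠ v + basis3 N j := by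
    intro j hj heq
    have := congrFun heq j
    simp [basis3] at this
  fin_cases k
  · have hS : plane3 N x₀ ∩ faceBd3 N (v, 0) = ∅ := by
      ext e
      simp only [Set.mem_inter_iff, Set.mem_empty_iff_false, iff_false]
      rintro ⟨hp, i, hi, hc⟩
      have h2 := (mem_plane3.mp hp).1
      rcases hc with rfl | ⟨j, hj1, hj2, rfl⟩ <;> exact hi (by simpa using h2)
    simp [hS]
  · show Even ((plane3 N x₀ ∩ faceBd3 N (v, 1)).ncard)
    by_cases h : v 0 = x₀
    · have hS : plane3 N x₀ ∩ faceBd3 N (v, 1) =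
          {(v, (0 : Fin 3)), (v + basis3 N 2, 0)} := by
        ext e
        simp only [Set.mem_inter_iff, Set.mem_insert_iff, Set.mem_singleton_iff]
        constructor
        · rintro ⟨hp, i, hi, hc⟩
          have h2 := (mem_plane3.mp hp).1
          rcases hc with rfl | ⟨j, hj1, hj2, rfl⟩
          · left; simp only at h2; rw [h2]
          · right
            simp only at h2
            subst h2
            have : j = 2 := by fin_cases j <;> simp_all
            rw [this]
        · have hb : (v + basis3 N 2) 0 = v 0 := by simp [basis3]
          rintro (rfl | rfl)
          · exact ⟨mem_plane3.mpr ⟨rfl, h⟩, 0, by simp, Or.inl rfl⟩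
          · exact ⟨mem_plane3.mpr ⟨rfl, by simp [basis3, h]⟩, 0, by simp,
              Or.inr ⟨2, by simp, by simp, rfl⟩⟩
      rw [hS, Set.ncard_pair (by simpa using pair 2 (by decide))]
      exact ⟨1, rfl⟩
    · have hS : plane3 N x₀ ∩ faceBd3 N (v, 1) = ∅ := by
        ext e
        simp only [Set.mem_inter_iff, Set.mem_empty_iff_false, iff_false]
        rintro ⟨hp, i, hi, hc⟩
        obtain ⟨h2, h0⟩ := mem_plane3.mp hp
        rcases hc with rfl | ⟨j, hj1, hj2, rfl⟩
        · simp only at h2 h0; exact h (h2 ▸ h0)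
        · simp only at h2 h0
          subst h2
          have : j = 2 := by fin_cases j <;> simp_all
          subst this
          simp [basis3] at h0
          exact h h0
      simp [hS]
  · show Even ((plane3 N x₀ ∩ faceBd3 N (v, 2)).ncard)
    by_cases h : v 0 = x₀
    · have hS : plane3 N x₀ ∩ faceBd3 N (v, 2) =
          {(v, (0 : Fin 3)), (v + basis3 N 1, 0)} := by
        ext e
        simp only [Set.mem_inter_iff, Set.mem_insert_iff, Set.mem_singleton_iff]
        constructor
        · rintro ⟨hp, i, hi, hc⟩
          have h2 := (mem_plane3.mp hp).1
          rcases hc with rfl | ⟨j, hj1, hj2, rfl⟩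
          · left; simp only at h2; rw [h2]
          · right
            simp only at h2
            subst h2
            have : j = 1 := by fin_cases j <;> simp_all
            rw [this]
        · have hb : (v + basis3 N 1) 0 = v 0 := by simp [basis3]
          rintro (rfl | rfl)
          · exact ⟨mem_plane3.mpr ⟨rfl, h⟩, 0, by simp, Or.inl rfl⟩
          · exact ⟨mem_plane3.mpr ⟨rfl, by simp [basis3, h]⟩, 0, by simp,
              Or.inr ⟨1, by simp, by simp, rfl⟩⟩
      rw [hS, Set.ncard_pair (by simpa using pair 1 (by decide))]
      exact ⟨1, rfl⟩
    · have hS : plane3 N x₀ ∩ faceBd3 N (v, 2) = ∅ := by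
        ext e
        simp only [Set.mem_inter_iff, Set.mem_empty_iff_false, iff_false]
        rintro ⟨hp, i, hi, hc⟩
        obtain ⟨h2, h0⟩ := mem_plane3.mp hp
        rcases hc with rfl | ⟨j, hj1, hj2, rfl⟩
        · simp only at h2 h0; exact h (h2 ▸ h0)
        · simp only at h2 h0
          subst h2
          have : j = 1 := by fin_cases j <;> simp_all
          subst this
          simp [basis3] at h0
          exact h h0
      simp [hS]
end

section
/- In the N×N×N 3-torus lattice, the straight loop L = {((t,0,0),0) : t ∈ ZMod N} is a 1-cycle, and for every x₀ ∈ ZMod N the intersection L ∩ P_{x₀} consists of exactly one edge; hence the logical σ_X supported on the non-contractible loop L and the logical σ_Z supported on the non-compressible 2-torus P_{x₀} intersect in an odd number of qubits and anticommute. -/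
/-- The straight loop `L` is a 1-cycle, and it meets each plane `P x₀` in exactly one
edge; hence the logical σ_X on `L` and the logical σ_Z on `P x₀` share an odd number of
qubits and anticommute. -/
theorem torus3_loop_meets_plane_once (N : ℕ) (hN : 2 ≤ N) :
    isCycle3 N (loop3 N) ∧
    ∀ x₀ : ZMod N, (loop3 N ∩ plane3 N x₀).ncard = 1 := by
  haveI : NeZero N := ⟨by omega⟩
  haveI : Fact (1 < N) := ⟨by omega⟩
  constructor
  · intro v
    by_cases h : v 1 = 0 ∧ v 2 = 0
    · have hset : loop3 N ∩ star3 N v = {(v, 0), (v - basis3 N 0, 0)} := by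
        ext e
        constructor
        · rintro ⟨⟨t, rfl⟩, ⟨i, hi | hi⟩⟩
          · rw [Prod.mk.injEq] at hi
            obtain ⟨h1, rfl⟩ := hi
            left
            rw [Prod.mk.injEq]
            exact ⟨h1, rfl⟩
          · rw [Prod.mk.injEq] at hi
            obtain ⟨h1, rfl⟩ := hi
            right
            rw [Set.mem_singleton_iff, Prod.mk.injEq]
            exact ⟨h1, rfl⟩
        · rintro (rfl | rfl)
          · refine ⟨⟨v 0, ?_⟩, ⟨0, Or.inl rfl⟩⟩
            rw [Prod.mk.injEq]
            refine ⟨funext fun j => ?_, rfl⟩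
            fin_cases j <;> simp [h.1, h.2]
          · refine ⟨⟨v 0 - 1, ?_⟩, ⟨0, Or.inr rfl⟩⟩
            rw [Prod.mk.injEq]
            refine ⟨funext fun j => ?_, rfl⟩
            fin_cases j <;> simp [basis3, h.1, h.2]
      rw [hset]
      have hne : (v, (0 : Fin 3)) ≠ (v - basis3 N 0, 0) := by
        intro hc
        rw [Prod.mk.injEq] at hc
        have := congrFun hc.1 0
        simp [basis3] at this
        exact one_ne_zero (sub_eq_zero.mp (by linear_combination this))
      rw [Set.ncard_pair hne]
      exact even_two
    · have hset : loop3 N ∩ star3 N v = ∅ := by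
        ext e
        simp only [Set.mem_empty_iff_false, iff_false]
        rintro ⟨⟨t, rfl⟩, ⟨i, hi | hi⟩⟩
        · rw [Prod.mk.injEq] at hi
          obtain ⟨h1, rfl⟩ := hi
          exact h ⟨by rw [← h1]; simp, by rw [← h1]; simp⟩
        · rw [Prod.mk.injEq] at hi
          obtain ⟨h1, rfl⟩ := hi
          have h1' := congrFun h1 1
          have h2' := congrFun h1 2
          simp [basis3] at h1' h2'
          exact h ⟨h1'.symm, h2'.symm⟩
      rw [hset]
      simp
  · intro x₀
    have hset : loop3 N ∩ plane3 N x₀ = {(![x₀, 0, 0], 0)} := by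
      ext e
      constructor
      · rintro ⟨⟨t, rfl⟩, ⟨y, z, he⟩⟩
        rw [Prod.mk.injEq] at he
        have h0 := congrFun he.1 0
        simp at h0
        rw [Set.mem_singleton_iff, Prod.mk.injEq]
        exact ⟨by rw [h0], rfl⟩
      · rintro rfl
        exact ⟨⟨x₀, rfl⟩, ⟨0, 0, rfl⟩⟩
    rw [hset, Set.ncard_singleton]
end
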